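/- There is a universal constant c > 0 such that for every domain X, every concept class H of functions X → {0,1} whose VC dimension is finite and equal to d, and every integer k ≥ 1, the VC dimension of the class H^{∧k} of all conjunctions (pointwise AND) of at most k concepts from H is at most c · k · log₂(2k) · d. -/

import Mathlib

/-- A concept class `C` shatters a finite set `A` if every Boolean labeling of `A`
is realized by some concept in `C`. -/
def Shatters {X : Type*} (C : Set (X → Bool)) (A : Finset X) : Prop :=
  ∀ f : X → Bool, ∃ c ∈ C, ∀ x ∈ A, c x = f x

/-- The VC dimension of a concept class: the supremum of sizes of shattered finite sets. -/
noncomputable def vcDim {X : Type*} (C : Set (X → Bool)) : ℕ∞ :=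
  ⨆ A ∈ {A : Finset X | Shatters C A}, (A.card : ℕ∞)

/-- `H^{∧k}`: all pointwise conjunctions of at most `k` (and at least one) concepts from `H`. -/
def conjK {X : Type*} (H : Set (X → Bool)) (k : ℕ) : Set (X → Bool) :=
  {g | ∃ l : List (X → Bool), l ≠ [] ∧ l.length ≤ k ∧ (∀ h ∈ l, h ∈ H) ∧
    g = fun x => l.all fun h => h x}


/-! On a set `A` shattered by `H^{∧k}` every subset of `A` is the trace of a conjunction, and the
trace of a conjunction of `k` concepts is the intersection of `k` traces of `H`. Hence
`2^|A| ≤ N^k`, where by Sauer–Shelah the number `N` of traces of `H` on `A` is at most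
`∑_{i ≤ d} C(|A|, i) ≤ (e|A|/d)^d`. Taking logarithms with `s = |A|/(dk)` gives
`s log 2 ≤ 1 + log k + log s`, and `log s ≤ s/e` forces
`s ≤ 4 (1 + log k) ≤ 4 log₂ (2k)`. -/

open Finset hiding Shatters vcDim

section Trace

variable {X : Type*}

-- Traces live in `Finset ↥A`, so that Mathlib's `Finset.Shatters` and Sauer–Shelah apply.
def traceSet (A : Finset X) (c : X → Bool) : Finset A :=
  univ.filter fun x => c x

open Classical in
noncomputable def trace (C : Set (X → Bool)) (A : Finset X) : Finset (Finset A) :=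
  univ.filter fun s => ∃ c ∈ C, traceSet A c = s

variable {C H : Set (X → Bool)} {A : Finset X}

lemma Shatters.card_le_vcDim (hA : Shatters C A) : (A.card : ℕ∞) ≤ vcDim C :=
  le_iSup₂ (f := fun (B : Finset X) (_ : B ∈ {B | Shatters C B}) => (B.card : ℕ∞)) A hA

@[simp]
lemma mem_traceSet {c : X → Bool} {x : A} : x ∈ traceSet A c ↔ c x = true := by
  simp [traceSet]

@[simp]
lemma mem_trace {s : Finset A} : s ∈ trace C A ↔ ∃ c ∈ C, traceSet A c = s := by
  simp [trace]

lemma Shatters.trace_eq_univ [DecidableEq X] (hA : Shatters C A) : trace C A = univ := by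
  refine eq_univ_of_forall fun s => ?_
  obtain ⟨c, hc, hcs⟩ := hA fun x => decide (x ∈ s.map (Function.Embedding.subtype _))
  exact mem_trace.2 ⟨c, hc, by ext x; simp [hcs x x.2]⟩

lemma Shatters.two_pow_card_le_card_trace [DecidableEq X] (hA : Shatters C A) :
    2 ^ A.card ≤ (trace C A).card := by
  rw [hA.trace_eq_univ, card_univ, Fintype.card_finset, Fintype.card_coe]

lemma shatters_map_of_shatters_trace [DecidableEq X] {s : Finset A}
    (hs : (trace C A).Shatters s) :
    Shatters C (s.map (Function.Embedding.subtype _)) := by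
  intro f
  obtain ⟨u, hu, hsu⟩ := hs (filter_subset (fun x : A => f x = true) s)
  obtain ⟨c, hc, rfl⟩ := mem_trace.1 hu
  refine ⟨c, hc, fun x hx => ?_⟩
  obtain ⟨y, hy, rfl⟩ := mem_map.1 hx
  have hcy : c y = true ↔ f y = true := by
    simpa [hy] using congrArg (y ∈ ·) hsu
  exact Bool.eq_iff_iff.2 hcy

lemma card_trace_le_sum_choose [DecidableEq X] {d : ℕ} (hH : vcDim H ≤ d) :
    (trace H A).card ≤ ∑ i ∈ Iic d, A.card.choose i := by
  have hvc : (trace H A).vcDim ≤ d := Finset.sup_le fun s hs => by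
    have := (shatters_map_of_shatters_trace (mem_shatterer.1 hs)).card_le_vcDim.trans hH
    simpa using this
  calc (trace H A).card ≤ (trace H A).shatterer.card := card_le_card_shatterer _
    _ ≤ ∑ i ∈ Iic (trace H A).vcDim, (Fintype.card A).choose i := card_shatterer_le_sum_vcDim
    _ ≤ ∑ i ∈ Iic d, A.card.choose i := by
      rw [Fintype.card_coe]
      exact sum_le_sum_of_subset (Iic_subset_Iic.2 hvc)

end Trace

section Conjunction

variable {X : Type*} {H : Set (X → Bool)} {k : ℕ}

lemma exists_fin_conj_of_mem_conjK {g : X → Bool} (hg : g ∈ conjK H k) :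
    ∃ h : Fin k → X → Bool, (∀ i, h i ∈ H) ∧
      ∀ x, g x = true ↔ ∀ i, h i x = true := by
  obtain ⟨l, hne, hlen, hH, rfl⟩ := hg
  -- pad the list to length `k` by repeating its head, which leaves the conjunction unchanged
  set h : Fin k → X → Bool := fun i => l.getD i (l.head hne)
  have h_mem (i : Fin k) : h i ∈ l := by
    by_cases hi : i.val < l.length
    · simp only [h, List.getD_eq_getElem l _ hi, List.getElem_mem]
    · simp only [h, List.getD_eq_default l _ (not_lt.1 hi), List.head_mem]
  refine ⟨h, fun i => hH _ (h_mem i), fun x => ?_⟩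
  simp only [List.all_eq_true]
  constructor
  · exact fun hall i => hall _ (h_mem i)
  · intro hall h' hh'
    obtain ⟨n, hn, rfl⟩ := List.getElem_of_mem hh'
    have h_eq : h ⟨n, hn.trans_le hlen⟩ = l[n] := List.getD_eq_getElem l _ hn
    exact h_eq ▸ hall _

lemma card_trace_conjK_le [DecidableEq X] (A : Finset X) :
    (trace (conjK H k) A).card ≤ (trace H A).card ^ k := by
  have hsurj : Set.SurjOn (fun v : Fin k → Finset A => univ.inf v)
      ↑(Fintype.piFinset fun _ : Fin k => trace H A) (trace (conjK H k) A) := by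
    intro s hs
    obtain ⟨g, hg, rfl⟩ := mem_trace.1 hs
    obtain ⟨h, hH, hgh⟩ := exists_fin_conj_of_mem_conjK hg
    refine ⟨fun i => traceSet A (h i), ?_, ?_⟩
    · simpa using fun i => ⟨h i, hH i, rfl⟩
    · ext x
      simp [mem_inf, hgh]
  calc (trace (conjK H k) A).card
      ≤ (Fintype.piFinset fun _ : Fin k => trace H A).card := card_le_card_of_surjOn _ hsurj
    _ = (trace H A).card ^ k := by simp

end Conjunction

open Real

lemma sum_Iic_choose_le_exp_mul_div_pow {m d : ℕ} (hd : 0 < d) (hdm : d ≤ m) :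
    (∑ i ∈ Iic d, (m.choose i : ℝ)) ≤ exp d * (m / d) ^ d := by
  set r : ℝ := d / m
  have hm : (0 : ℝ) < m := by exact_mod_cast hd.trans_le hdm
  have hr : 0 < r := by positivity
  have hr1 : r ≤ 1 := div_le_one_of_le₀ (by exact_mod_cast hdm) hm.le
  have hsum : (∑ i ∈ Iic d, (m.choose i : ℝ)) * r ^ d ≤ exp d := calc
    (∑ i ∈ Iic d, (m.choose i : ℝ)) * r ^ d
        ≤ ∑ i ∈ Iic d, r ^ i * (m.choose i : ℝ) := by
      rw [sum_mul]
      refine sum_le_sum fun i hi => ?_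
      rw [mul_comm]
      exact mul_le_mul_of_nonneg_right (pow_le_pow_of_le_one hr.le hr1 (mem_Iic.1 hi))
        (Nat.cast_nonneg _)
    _ ≤ ∑ i ∈ range (m + 1), r ^ i * (m.choose i : ℝ) := by
      refine sum_le_sum_of_subset_of_nonneg (fun i hi => ?_) fun i _ _ => by positivity
      simp only [mem_Iic, mem_range] at hi ⊢
      omega
    _ = (1 + r) ^ m := by rw [add_comm 1 r, add_pow]; simp
    _ ≤ exp (r * m) := by
      rw [mul_comm, exp_nat_mul]
      gcongr
      linarith [add_one_le_exp r]
    _ = exp d := by rw [div_mul_cancel₀ _ hm.ne']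
  have hcancel : r ^ d * (m / d : ℝ) ^ d = 1 := by
    rw [← mul_pow, div_mul_div_cancel₀ hm.ne', div_self (Nat.cast_pos.2 hd).ne', one_pow]
  calc (∑ i ∈ Iic d, (m.choose i : ℝ))
      = (∑ i ∈ Iic d, (m.choose i : ℝ)) * r ^ d * (m / d) ^ d := by
        rw [mul_assoc, hcancel, mul_one]
    _ ≤ exp d * (m / d) ^ d := by gcongr

lemma one_add_log_le_logb_two_mul {x : ℝ} (hx : 1 ≤ x) : 1 + log x ≤ logb 2 (2 * x) := by
  have hlog2 : 0 < log 2 := log_pos one_lt_two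
  rw [logb, log_mul two_ne_zero (by positivity), add_div, div_self hlog2.ne']
  gcongr
  exact le_div_self (log_nonneg hx) hlog2 (by linarith [log_two_lt_d9])

lemma le_four_mul_mul_one_add_log {M D K : ℝ} (hM : 0 < M) (hD : 0 < D) (hK : 1 ≤ K)
    (h : M * log 2 ≤ K * D * (1 + log (M / D))) : M ≤ 4 * D * K * (1 + log K) := by
  set s := M / (D * K)
  have hDK : 0 < D * K := by positivity
  have hs : 0 < s := by positivity
  have hMs : M = D * K * s := (mul_div_cancel₀ M hDK.ne').symm
  have hlog_MD : log (M / D) = log K + log s := by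
    rw [← log_mul (by positivity) hs.ne', hMs]; field_simp
  have h_s : s * log 2 ≤ 1 + log K + log s := by
    refine le_of_mul_le_mul_left ?_ hDK
    calc D * K * (s * log 2) = M * log 2 := by rw [hMs]; ring
      _ ≤ K * D * (1 + log (M / D)) := h
      _ = D * K * (1 + log K + log s) := by rw [hlog_MD]; ring
  -- `log s ≤ s / e` is `log y ≤ y - 1` at `y = s / e`
  have hlog_s : log s ≤ s / exp 1 := by
    have := log_le_sub_one_of_pos (show 0 < s / exp 1 by positivity)
    rw [log_div hs.ne' (exp_ne_zero 1), log_exp] at this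
    linarith
  have he : s / exp 1 ≤ 0.38 * s := by
    rw [div_le_iff₀ (exp_pos 1)]
    nlinarith [exp_one_gt_d9]
  have hs4 : s ≤ 4 * (1 + log K) := by
    nlinarith [log_two_gt_d9, log_nonneg hK]
  calc M = D * K * s := hMs
    _ ≤ D * K * (4 * (1 + log K)) := by gcongr
    _ = 4 * D * K * (1 + log K) := by ring

lemma cast_le_of_two_pow_le_sum_choose_pow {m d k : ℕ} (hk : 1 ≤ k)
    (h : 2 ^ m ≤ (∑ i ∈ Iic d, m.choose i) ^ k) :
    (m : ℝ) ≤ 4 * k * logb 2 (2 * k) * d := by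
  have hk' : (1 : ℝ) ≤ k := by exact_mod_cast hk
  have hlogb := one_add_log_le_logb_two_mul hk'
  rcases le_or_gt m (d * k) with hmd | hmd
  · have hmd' : (m : ℝ) ≤ d * k := by exact_mod_cast hmd
    nlinarith [log_nonneg hk', (Nat.cast_nonneg d : (0 : ℝ) ≤ d)]
  have hd : 0 < d := by
    refine Nat.pos_of_ne_zero fun hd0 => ?_
    subst hd0
    simp only [← Nat.bot_eq_zero, Iic_bot, sum_singleton] at h
    simp only [Nat.bot_eq_zero, Nat.choose_zero_right, one_pow] at h
    exact absurd (Nat.one_lt_two_pow (by omega)) h.not_gt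
  have hdm : d ≤ m := (Nat.le_mul_of_pos_right d hk).trans hmd.le
  have hm : (0 : ℝ) < m := by exact_mod_cast hd.trans_le hdm
  have hlog : (m : ℝ) * log 2 ≤ k * d * (1 + log (m / d)) := by
    have h' : (2 : ℝ) ^ m ≤ (exp d * (m / d) ^ d) ^ k := calc
      (2 : ℝ) ^ m ≤ (∑ i ∈ Iic d, (m.choose i : ℝ)) ^ k := by exact_mod_cast h
      _ ≤ (exp d * (m / d) ^ d) ^ k := by
        gcongr
        exact sum_Iic_choose_le_exp_mul_div_pow hd hdm
    have := log_le_log (by positivity) h'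
    rw [log_pow, log_pow, log_mul (exp_ne_zero _) (by positivity), log_exp, log_pow] at this
    linarith
  calc (m : ℝ) ≤ 4 * d * k * (1 + log k) :=
        le_four_mul_mul_one_add_log hm (by positivity) hk' hlog
    _ ≤ 4 * d * k * logb 2 (2 * k) := by gcongr
    _ = 4 * k * logb 2 (2 * k) * d := by ring

/-- There is a universal constant `c > 0` such that for every domain `X`, every concept
class `H` with finite VC dimension `d`, and every `k ≥ 1`, the VC dimension of `H^{∧k}`
is at most `c · k · log₂(2k) · d`. -/
theorem stmt1 :
    ∃ c : ℝ, 0 < c ∧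
      ∀ (X : Type) (H : Set (X → Bool)) (d k : ℕ), 1 ≤ k →
        vcDim H = (d : ℕ∞) →
        ∀ A : Finset X, Shatters (conjK H k) A →
          (A.card : ℝ) ≤ c * k * Real.logb 2 (2 * k) * d := by
  refine ⟨4, by norm_num, fun X H d k hk hvc A hA => ?_⟩
  classical
  refine cast_le_of_two_pow_le_sum_choose_pow hk ?_
  calc 2 ^ A.card ≤ (trace (conjK H k) A).card := hA.two_pow_card_le_card_trace
    _ ≤ (trace H A).card ^ k := card_trace_conjK_le A
    _ ≤ (∑ i ∈ Iic d, A.card.choose i) ^ k := by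
      gcongr
      exact card_trace_le_sum_choose hvc.le
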